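/- arXiv:1303.5569 — 4 statements merged into one kernel-verified Lean document; each statement's English description precedes it below -/
import Mathlib

section
/- For every finite type E, every natural number l, and every sequence e : Fin l → E, one has ‖w(e)‖₁ = l if and only if e is tight, i.e., e(i) = e(j) implies i ≡ j (mod 2). -/
open scoped Classical
open Finset

noncomputable section

/-- The alternating weighting `w(e) = ∑ i, (-1)^i δ_{e i}` of a sequence
`e : Fin l → E`, where `δ_x` is the indicator function of `x`. -/
def altW {E : Type} (l : ℕ) (e : Fin l → E) : E → ℤ :=
  fun x => ∑ i : Fin l, if e i = x then (-1 : ℤ) ^ (i : ℕ) else 0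

/-! Splitting the occurrences of `x` in `e` by the parity of their position gives
`w(e)(x) = a - b` while `x` occurs `a + b` times. Hence `‖w(e)‖₁ ≤ l`, with equality iff
`|a - b| = a + b` for every `x`, i.e. iff all occurrences of each `x` have the same parity. -/

lemma Int.abs_natCast_sub_eq_natCast_add_iff (a b : ℕ) :
    |(a : ℤ) - b| = a + b ↔ a = 0 ∨ b = 0 := by
  rcases abs_cases ((a : ℤ) - b) with ⟨h, _⟩ | ⟨h, _⟩ <;> omega

section

variable {E : Type} {l : ℕ} (e : Fin l → E) (x : E)

lemma altW_eq_card_even_sub_card_odd :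
    altW l e x = #{i | e i = x ∧ Even (i : ℕ)} - #{i | e i = x ∧ Odd (i : ℕ)} := by
  have hsplit := sum_filter_add_sum_filter_not {i | e i = x} (fun i : Fin l => Even (i : ℕ))
    fun i => (-1 : ℤ) ^ (i : ℕ)
  rw [altW, ← sum_filter, ← hsplit, sum_congr rfl fun i hi => (mem_filter.1 hi).2.neg_one_pow,
    sum_congr rfl fun i hi => (Nat.not_even_iff_odd.1 (mem_filter.1 hi).2).neg_one_pow]
  simp only [filter_filter, sum_const, Int.nsmul_eq_mul, mul_one, mul_neg, Nat.not_even_iff_odd,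
    sub_eq_add_neg]

lemma card_even_add_card_odd :
    #{i | e i = x ∧ Even (i : ℕ)} + #{i | e i = x ∧ Odd (i : ℕ)} = #{i | e i = x} := by
  simpa only [filter_filter, Nat.not_even_iff_odd] using
    card_filter_add_card_filter_not (s := {i | e i = x}) fun i : Fin l => Even (i : ℕ)

lemma abs_altW_le_card_fiber : |altW l e x| ≤ #{i | e i = x} := by
  rw [altW_eq_card_even_sub_card_odd, ← card_even_add_card_odd]
  push_cast
  exact abs_sub _ _ |>.trans_eq (by simp)

lemma abs_altW_eq_card_fiber_iff :
    |altW l e x| = #{i | e i = x} ↔ ∀ i j, e i = x → e j = x → (i : ℕ) % 2 = (j : ℕ) % 2 := by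
  rw [altW_eq_card_even_sub_card_odd, ← card_even_add_card_odd]
  push_cast
  rw [Int.abs_natCast_sub_eq_natCast_add_iff, card_eq_zero, card_eq_zero, filter_eq_empty_iff,
    filter_eq_empty_iff]
  constructor
  · rintro (hodd | heven) i j hi hj
    · have hi' := Nat.odd_iff.1 (Nat.not_even_iff_odd.1 fun h => hodd (mem_univ i) ⟨hi, h⟩)
      have hj' := Nat.odd_iff.1 (Nat.not_even_iff_odd.1 fun h => hodd (mem_univ j) ⟨hj, h⟩)
      rw [hi', hj']
    · have hi' := Nat.even_iff.1 (Nat.not_odd_iff_even.1 fun h => heven (mem_univ i) ⟨hi, h⟩)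
      have hj' := Nat.even_iff.1 (Nat.not_odd_iff_even.1 fun h => heven (mem_univ j) ⟨hj, h⟩)
      rw [hi', hj']
  · intro h
    by_contra! ⟨⟨i, -, hi, hi_even⟩, ⟨j, -, hj, hj_odd⟩⟩
    have := h i j hi hj
    rw [Nat.even_iff.1 hi_even, Nat.odd_iff.1 hj_odd] at this
    omega

lemma sum_card_fiber [Fintype E] : ∑ x, #{i | e i = x} = l := by
  rw [← card_eq_sum_card_fiberwise fun i _ => mem_univ (e i), card_univ, Fintype.card_fin]

end

/-- `‖w(e)‖₁ = l` iff the sequence `e` is tight, i.e. `e i = e j` implies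
`i ≡ j (mod 2)`. -/
theorem stmt_1 (E : Type) [Fintype E] (l : ℕ) (e : Fin l → E) :
    (∑ x : E, |altW l e x|) = (l : ℤ) ↔
      ∀ i j : Fin l, e i = e j → (i : ℕ) % 2 = (j : ℕ) % 2 := by
  have hle (x : E) (_ : x ∈ univ) : |altW l e x| ≤ #{i | e i = x} := abs_altW_le_card_fiber e x
  rw [show (l : ℤ) = ∑ x, (#{i | e i = x} : ℤ) by exact_mod_cast (sum_card_fiber e).symm,
    sum_eq_sum_iff_of_le hle]
  simp only [mem_univ, forall_const, abs_altW_eq_card_fiber_iff]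
  exact ⟨fun h i j hij => h (e j) i j hij rfl, fun h x i j hi hj => h i j (hi.trans hj.symm)⟩
end
end

section
/- The thread flow of any sequence traversal on a sequence graph is a nonnegative integer flow: it takes nonnegative values and satisfies the balance condition at every vertex. -/
open scoped Classical
open Finset

noncomputable section

/-- A sequence graph: finite multigraph whose edges are split into segment
edges (`seg`) and bond edges, each segment edge having two distinct endpoints. -/
structure SeqGraph (V E : Type) where
  ends : E → Sym2 V
  seg : E → Prop
  seg_not_diag : ∀ x : E, seg x → ¬ (ends x).IsDiag

namespace SeqGraph

variable {V E : Type} [Fintype V] [Fintype E]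

/-- Incidence multiplicity of vertex `u` on edge `x`. -/
def mult (G : SeqGraph V E) (u : V) (x : E) : ℤ :=
  if G.ends x = s(u, u) then 2 else if u ∈ G.ends x then 1 else 0

/-- The balance condition: at each vertex the total weight of segment-edge
incidences equals the total weight of bond-edge incidences. -/
def IsFlow (G : SeqGraph V E) (f : E → ℤ) : Prop :=
  ∀ u : V,
    (∑ x : E, if G.seg x then G.mult u x * f x else 0) =
      ∑ x : E, if G.seg x then 0 else G.mult u x * f x

/-- ℓ¹ norm of an integer weighting. -/
def l1 (f : E → ℤ) : ℤ := ∑ x : E, |f x|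

/-- A (nonzero) integer flow is minimal if it admits no nontrivial ℓ¹-additive
decomposition into nonzero integer flows. -/
def MinimalFlow (G : SeqGraph V E) (f : E → ℤ) : Prop :=
  ¬ ∃ f₁ f₂ : E → ℤ, G.IsFlow f₁ ∧ G.IsFlow f₂ ∧ f₁ ≠ 0 ∧ f₂ ≠ 0 ∧
      f = f₁ + f₂ ∧ l1 f = l1 f₁ + l1 f₂

/-- A cycle traversal of length `L ≥ 1`. -/
structure CycleTraversal (G : SeqGraph V E) where
  L : ℕ
  pos : L ≠ 0
  e : ZMod L → E
  v : ZMod L → V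
  compat : ∀ i : ZMod L, G.ends (e i) = s(v (i - 1), v i)

variable {G : SeqGraph V E}

/-- Number of indices at which the traversal uses edge `x`. -/
def CycleTraversal.threadCount (t : G.CycleTraversal) (x : E) : ℕ :=
  haveI : NeZero t.L := ⟨t.pos⟩
  (Finset.univ.filter fun i : ZMod t.L => t.e i = x).card

/-- The thread flow of a traversal. -/
def CycleTraversal.threadFlow (t : G.CycleTraversal) : E → ℤ :=
  fun x => (t.threadCount x : ℤ)

/-- A sequence traversal: even length, alternating between segment edges
(at even indices) and bond edges (at odd indices). -/
def CycleTraversal.IsSeqTraversal (t : G.CycleTraversal) : Prop :=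
  Even t.L ∧ ∀ i : ZMod t.L, G.seg (t.e i) ↔ Even i.val

/-- Alternating weighting `∑ i, (-1)^i δ_{e i}` of an (even-length) traversal. -/
def CycleTraversal.altWeight (t : G.CycleTraversal) : E → ℤ :=
  haveI : NeZero t.L := ⟨t.pos⟩
  fun x => ∑ i : ZMod t.L, if t.e i = x then (-1 : ℤ) ^ i.val else 0

/-- Conjugate weighting: keep the value on segment edges, negate on bonds. -/
def conj (G : SeqGraph V E) (g : E → ℤ) : E → ℤ :=
  fun x => if G.seg x then g x else -g x

/-- Alternating flow: the conjugate of the alternating weighting. -/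
def CycleTraversal.altFlow (t : G.CycleTraversal) : E → ℤ :=
  G.conj t.altWeight

/-- Tight: equal edges only appear at indices of equal parity. -/
def CycleTraversal.Tight (t : G.CycleTraversal) : Prop :=
  ∀ i j : ZMod t.L, t.e i = t.e j → i.val % 2 = j.val % 2

/-- Synchronized: coinciding (distinct, same end vertex) indices differ by an
odd integer. -/
def CycleTraversal.Synchronized (t : G.CycleTraversal) : Prop :=
  ∀ i j : ZMod t.L, i ≠ j → t.v i = t.v j → Odd ((i.val : ℤ) - (j.val : ℤ))

/-- Nested: no interleaved pairs of coinciding indices. -/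
def CycleTraversal.Nested (t : G.CycleTraversal) : Prop :=
  ¬ ∃ i₁ i₂ j₁ j₂ : ZMod t.L,
      i₁.val < i₂.val ∧ i₂.val < j₁.val ∧ j₁.val < j₂.val ∧
      t.v i₁ = t.v j₁ ∧ t.v i₂ = t.v j₂

/-- Connectivity: any two vertices are joined by a finite walk along edges. -/
def Connected (G : SeqGraph V E) : Prop :=
  ∀ a b : V, ∃ (n : ℕ) (p : Fin (n + 1) → V), p 0 = a ∧ p (Fin.last n) = b ∧
    ∀ i : Fin n, ∃ x : E, G.ends x = s(p i.castSucc, p i.succ)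

end SeqGraph

/-! The incidence multiplicity of `u` on the edge `e i` is the number of endpoints
`v (i - 1)`, `v i` equal to `u`, so each visit `v j = u` contributes one incidence to
the edge `e j` and one to `e (j + 1)`. Along a sequence traversal these two edges have
opposite kinds, hence both sides of the balance condition at `u` count the visits to `u`. -/

theorem ZMod.even_val_add_one_iff {n : ℕ} [NeZero n] (hn : Even n) (j : ZMod n) :
    Even (j + 1).val ↔ ¬ Even j.val := by
  have hn1 : 1 < n := by
    obtain ⟨k, rfl⟩ := hn
    have := NeZero.ne (k + k)
    omega
  rw [ZMod.val_add, ZMod.val_one_eq_one_mod, Nat.mod_eq_of_lt hn1, Nat.even_iff, Nat.even_iff,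
    Nat.mod_mod_of_dvd _ hn.two_dvd]
  omega

/-- If `P` alternates along steps of `d`, every `i` is counted exactly once on the left:
either as `i` with `P i`, or as `(i + d) - d` with `P (i + d)`. -/
theorem Fintype.sum_ite_sub_add_of_alternating {ι M : Type*} [AddGroup ι] [Fintype ι]
    [AddCommMonoid M] (d : ι) (P : ι → Prop) (hP : ∀ i, P (i + d) ↔ ¬ P i) (B : ι → M) :
    (∑ i, if P i then B (i - d) + B i else 0) = ∑ i, B i := by
  have hshift : (∑ i, if P i then B (i - d) else 0) = ∑ i, if ¬ P i then B i else 0 :=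
    (Fintype.sum_equiv (Equiv.addRight d) _ _ fun i => by simp [hP i]).symm
  simp only [ite_add_zero, Finset.sum_add_distrib]
  rw [hshift, ← Finset.sum_add_distrib]
  exact Finset.sum_congr rfl fun i _ => by by_cases h : P i <;> simp [h]

namespace SeqGraph

variable {V E : Type} {G : SeqGraph V E}

theorem mult_eq_of_ends_eq {x : E} {a b : V} (h : G.ends x = s(a, b)) (u : V) :
    G.mult u x = (if a = u then 1 else 0) + (if b = u then 1 else 0) := by
  by_cases ha : a = u <;> by_cases hb : b = u <;> simp [mult, h, ha, hb, eq_comm]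

namespace CycleTraversal

theorem sum_mul_threadFlow [Fintype E] (t : G.CycleTraversal) (c : E → ℤ) :
    haveI : NeZero t.L := ⟨t.pos⟩
    ∑ x, c x * t.threadFlow x = ∑ i : ZMod t.L, c (t.e i) := by
  have : NeZero t.L := ⟨t.pos⟩
  rw [← Finset.sum_fiberwise' Finset.univ t.e c]
  refine Finset.sum_congr rfl fun x _ => ?_
  simp [threadFlow, threadCount, mul_comm]

theorem IsSeqTraversal.seg_e_add_one_iff {t : G.CycleTraversal} (ht : t.IsSeqTraversal)
    (i : ZMod t.L) : G.seg (t.e (i + 1)) ↔ ¬ G.seg (t.e i) := by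
  have : NeZero t.L := ⟨t.pos⟩
  rw [ht.2, ht.2, ZMod.even_val_add_one_iff ht.1]

theorem sum_ite_mult_mul_threadFlow [Fintype E] (t : G.CycleTraversal) (S : E → Prop)
    (hS : ∀ i, S (t.e (i + 1)) ↔ ¬ S (t.e i)) (u : V) :
    haveI : NeZero t.L := ⟨t.pos⟩
    (∑ x, if S x then G.mult u x * t.threadFlow x else 0) =
      ∑ j : ZMod t.L, if t.v j = u then 1 else 0 := by
  have : NeZero t.L := ⟨t.pos⟩
  simp only [← ite_zero_mul, sum_mul_threadFlow]
  rw [← Fintype.sum_ite_sub_add_of_alternating 1 (fun i => S (t.e i)) hS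
    (fun j => if t.v j = u then 1 else 0)]
  simp only [mult_eq_of_ends_eq (t.compat _)]

end CycleTraversal

end SeqGraph

theorem stmt_4_general (V E : Type) [Fintype E] (G : SeqGraph V E)
    (t : G.CycleTraversal) (ht : t.IsSeqTraversal) :
    (∀ x : E, 0 ≤ t.threadFlow x) ∧ G.IsFlow t.threadFlow := by
  refine ⟨fun x => Int.natCast_nonneg _, fun u => ?_⟩
  have hbond := t.sum_ite_mult_mul_threadFlow (fun x => ¬ G.seg x)
    (fun i => not_congr (ht.seg_e_add_one_iff i)) u
  rw [t.sum_ite_mult_mul_threadFlow _ ht.seg_e_add_one_iff, ← hbond]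
  exact Finset.sum_congr rfl fun x _ => by by_cases h : G.seg x <;> simp [h]

/-- The thread flow of a sequence traversal is a nonnegative integer flow. -/
theorem stmt_4 (V E : Type) [Fintype V] [Fintype E] (G : SeqGraph V E)
    (t : G.CycleTraversal) (ht : t.IsSeqTraversal) :
    (∀ x : E, 0 ≤ t.threadFlow x) ∧ G.IsFlow t.threadFlow :=
  stmt_4_general V E G t ht
end
end

section
/- A synchronized and nested even-length cycle traversal on a sequence graph uses each edge at most twice: for every edge x, the number of indices i with e(i) = x is at most 2; consequently its alternating flow f satisfies |f(x)| ≤ 2 for every edge x. -/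
/-!
Suppose an edge `x` is used at three distinct indices. If `x` is a loop at a vertex `u`, these
three indices all end at `u`, and three integers cannot have pairwise odd differences. Otherwise
two of the three uses traverse `x` in the same direction, `v (p - 1) → v p` and
`v (q - 1) → v q`, and the coinciding pairs `(p - 1, q - 1)` and `(p, q)` interleave. The bound
on the alternating flow follows, since `|f x|` is at most the number of uses of `x`.
-/

open scoped Classical
open Finset

noncomputable section

namespace ZMod

variable {n : ℕ} [NeZero n]

theorem val_sub_one_of_val_ne_zero {i : ZMod n} (hi : i.val ≠ 0) : (i - 1).val = i.val - 1 := by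
  rcases n with _ | _ | n
  · exact absurd rfl (NeZero.ne 0)
  · exact absurd (Nat.lt_one_iff.mp i.val_lt) hi
  · have h1 : (1 : ZMod (n + 2)).val = 1 := by simp [val_one_eq_one_mod]
    rw [val_sub (by omega), h1]

theorem val_sub_one_of_val_eq_zero {i : ZMod n} (hi : i.val = 0) : (i - 1).val = n - 1 := by
  obtain ⟨m, rfl⟩ := Nat.exists_eq_succ_of_ne_zero (NeZero.ne n)
  rw [(val_eq_zero i).mp hi, zero_sub, val_neg_one, Nat.succ_sub_one]

end ZMod

theorem Sym2.prod_eq_or_eq_or_eq_of_mk_eq {α : Type*} {a₁ b₁ a₂ b₂ a₃ b₃ : α}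
    (h₂ : s(a₁, b₁) = s(a₂, b₂)) (h₃ : s(a₁, b₁) = s(a₃, b₃)) :
    (a₁, b₁) = (a₂, b₂) ∨ (a₁, b₁) = (a₃, b₃) ∨ (a₂, b₂) = (a₃, b₃) := by
  rcases Sym2.eq_iff.mp h₂ with ⟨rfl, rfl⟩ | ⟨rfl, rfl⟩ <;>
    rcases Sym2.eq_iff.mp h₃ with ⟨rfl, rfl⟩ | ⟨rfl, rfl⟩ <;> simp

namespace SeqGraph

variable {V E : Type} {G : SeqGraph V E}

theorem abs_conj (G : SeqGraph V E) (g : E → ℤ) (x : E) : |G.conj g x| = |g x| := by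
  unfold conj
  split_ifs <;> simp

namespace CycleTraversal

variable (t : G.CycleTraversal)

theorem abs_altWeight_le_threadCount (x : E) : |t.altWeight x| ≤ t.threadCount x := by
  have : NeZero t.L := ⟨t.pos⟩
  calc |t.altWeight x| ≤ ∑ i : ZMod t.L, |if t.e i = x then (-1 : ℤ) ^ i.val else 0| :=
        Finset.abs_sum_le_sum_abs _ _
    _ = ∑ i : ZMod t.L, if t.e i = x then 1 else 0 :=
        Finset.sum_congr rfl fun i _ => by split_ifs <;> simp
    _ = t.threadCount x := by rw [Finset.sum_boole]; rfl

variable {t}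

theorem Synchronized.false_of_three_coincide (hsync : t.Synchronized) {i j k : ZMod t.L}
    (hij : i ≠ j) (hik : i ≠ k) (hjk : j ≠ k) (hj : t.v i = t.v j) (hk : t.v i = t.v k) :
    False := by
  obtain ⟨a, ha⟩ := hsync i j hij hj
  obtain ⟨b, hb⟩ := hsync i k hik hk
  obtain ⟨c, hc⟩ := hsync j k hjk (hj.symm.trans hk)
  omega

theorem Nested.false_of_parallel (hnest : t.Nested) {p q : ZMod t.L} (hpq : p ≠ q)
    (hstep : (t.v (p - 1), t.v p) = (t.v (q - 1), t.v q)) (hne : t.v (p - 1) ≠ t.v p) :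
    False := by
  have : NeZero t.L := ⟨t.pos⟩
  have val_ne : ∀ {i j : ZMod t.L}, t.v i ≠ t.v j → i.val ≠ j.val :=
    fun h hval => h (congrArg t.v (ZMod.val_injective _ hval))
  obtain ⟨hv₁, hv⟩ := Prod.mk.inj hstep
  wlog hlt : p.val < q.val generalizing p q
  · have hval := (ZMod.val_injective t.L).ne hpq
    exact this hpq.symm hstep.symm (by rwa [← hv₁, ← hv]) hv₁.symm hv.symm (by omega)
  have hq1 : (q - 1).val = q.val - 1 := ZMod.val_sub_one_of_val_ne_zero (by omega)
  have hpq1 : p.val ≠ (q - 1).val := val_ne fun h => hne (hv₁.trans h.symm)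
  by_cases hp0 : p.val = 0
  · -- `p - 1` wraps around to `L - 1`, so the interleaving is `p < q - 1 < q < p - 1`.
    have hp1 : (p - 1).val = t.L - 1 := ZMod.val_sub_one_of_val_eq_zero hp0
    have hqp1 : q.val ≠ (p - 1).val := val_ne fun h => hne (h ▸ hv).symm
    have hqL := q.val_lt
    exact hnest ⟨p, q - 1, q, p - 1, by omega, by omega, by omega, hv, hv₁.symm⟩
  · have hp1 : (p - 1).val = p.val - 1 := ZMod.val_sub_one_of_val_ne_zero hp0
    exact hnest ⟨p - 1, p, q - 1, q, by omega, by omega, by omega, hv₁, hv⟩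

theorem threadCount_le_two (hsync : t.Synchronized) (hnest : t.Nested) (x : E) :
    t.threadCount x ≤ 2 := by
  have : NeZero t.L := ⟨t.pos⟩
  by_contra! h
  obtain ⟨p, hp, q, hq, r, hr, hpq, hpr, hqr⟩ := Finset.two_lt_card.mp h
  simp only [Finset.mem_filter, Finset.mem_univ, true_and] at hp hq hr
  have hends : ∀ {i}, t.e i = x → G.ends x = s(t.v (i - 1), t.v i) := fun h => h ▸ t.compat _
  by_cases hloop : (G.ends x).IsDiag
  · have hdiag : ∀ {i}, t.e i = x → t.v (i - 1) = t.v i := fun h =>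
      Sym2.mk_isDiag_iff.mp (hends h ▸ hloop)
    have hsame : ∀ {i j}, t.e i = x → t.e j = x → t.v i = t.v j := fun hi hj => by
      have hij := (hends hi).symm.trans (hends hj)
      rw [hdiag hi, hdiag hj, Sym2.eq_iff] at hij
      exact hij.elim And.left And.left
    exact hsync.false_of_three_coincide hpq hpr hqr (hsame hp hq) (hsame hp hr)
  · have hne : ∀ {i}, t.e i = x → t.v (i - 1) ≠ t.v i := fun h he =>
      hloop (hends h ▸ Sym2.mk_isDiag_iff.mpr he)
    rcases Sym2.prod_eq_or_eq_or_eq_of_mk_eq ((hends hp).symm.trans (hends hq))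
      ((hends hp).symm.trans (hends hr)) with h | h | h
    · exact hnest.false_of_parallel hpq h (hne hp)
    · exact hnest.false_of_parallel hpr h (hne hp)
    · exact hnest.false_of_parallel hqr h (hne hq)

end CycleTraversal

end SeqGraph

theorem stmt_12_general (V E : Type) (G : SeqGraph V E)
    (t : G.CycleTraversal)
    (hsync : t.Synchronized) (hnest : t.Nested) :
    (∀ x : E, t.threadCount x ≤ 2) ∧ ∀ x : E, |t.altFlow x| ≤ 2 := by
  have hcount := t.threadCount_le_two hsync hnest
  refine ⟨hcount, fun x => ?_⟩
  rw [SeqGraph.CycleTraversal.altFlow, SeqGraph.abs_conj]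
  exact (t.abs_altWeight_le_threadCount x).trans (by exact_mod_cast hcount x)

/-- A synchronized and nested even-length cycle traversal uses every edge at
most twice; consequently its alternating flow is bounded by 2 in absolute
value on every edge. -/
theorem stmt_12 (V E : Type) [Fintype V] [Fintype E] (G : SeqGraph V E)
    (t : G.CycleTraversal) (hL : Even t.L)
    (hsync : t.Synchronized) (hnest : t.Nested) :
    (∀ x : E, t.threadCount x ≤ 2) ∧ ∀ x : E, |t.altFlow x| ≤ 2 :=
  stmt_12_general V E G t hsync hnest
end
end

section
/- Let l ≥ 1 and let P be a set of pairs (i, j) of indices in Fin l with i < j that is nested. Let ~ be the equivalence relation on Fin l generated by relating i to j for every (i, j) ∈ P, and consider the quotient cycle graph whose vertices are the ~-classes, with one edge labeled i joining the class of i and the class of i+1 (mod l) for each i ∈ Fin l. Then for any two distinct classes A and B there exist two edge labels p, q ∈ Fin l such that A and B are not connected once the edges labeled p and q are removed: A and B are not related by the reflexive-transitive closure of the relation S, where S(X, Y) holds iff there exists i ∈ Fin l with i ≠ p, i ≠ q and {X, Y} = {class of i, class of (i+1 mod l)}. (Hence merging the vertices of a simple cycle along nested coinciding pairs yields a cactus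 graph.) -/
/-!
Call `s` saturated if no pair of `P` has exactly one endpoint in `s`; membership in a saturated
set is then constant on classes. If a class has least element `x` and greatest element `y`, the
interval `[x, y]` is saturated: a point of `[x, y]` outside the class lies under some pair of the
class (walk along the pairs linking `x` to `y`), and that pair would cross any pair of `P` with
exactly one endpoint in `[x, y]`. Of two distinct classes, the hull of the one with the larger
minimum misses the other's minimum, so it separates them. On the cycle only the edge entering `x`
and the edge leaving `y` join `[x, y]` to its complement; once they are removed, membership in
`[x, y]` is constant along paths.
-/

open Relation

/-- The cyclic successor of an index in `Fin l`. -/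
def nxt {l : ℕ} (i : Fin l) : Fin l := ⟨((i : ℕ) + 1) % l, Nat.mod_lt _ i.pos⟩

section Nested

variable {α : Type*} {P : Set (α × α)}

def pairRel (P : Set (α × α)) (i j : α) : Prop := (i, j) ∈ P

def Saturated (P : Set (α × α)) (s : Set α) : Prop :=
  ∀ p ∈ P, p.1 ∈ s ↔ p.2 ∈ s

theorem Saturated.mem_iff_of_eqvGen {s : Set α} (hs : Saturated P s) {v w : α}
    (h : EqvGen (pairRel P) v w) : v ∈ s ↔ w ∈ s := by
  induction h with
  | rel c d hcd => exact hs (c, d) hcd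
  | refl => rfl
  | symm _ _ _ ih => exact ih.symm
  | trans _ _ _ _ _ ih₁ ih₂ => exact ih₁.trans ih₂

variable [LinearOrder α]

def Nested (P : Set (α × α)) : Prop :=
  ¬ ∃ p q : α × α, p ∈ P ∧ q ∈ P ∧ p.1 < q.1 ∧ q.1 < p.2 ∧ p.2 < q.2

theorem exists_straddle_of_eqvGen (hlt : ∀ p ∈ P, p.1 < p.2) {u w i : α}
    (huw : EqvGen (pairRel P) u w) (hui : u < i) (hiw : i < w)
    (hi : ¬ EqvGen (pairRel P) u i) :
    ∃ p ∈ P, EqvGen (pairRel P) u p.1 ∧ p.1 < i ∧ i < p.2 := by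
  by_contra! hno
  rw [← EqvGen.reflTransGen_symmGen] at huw hi hno
  suffices ∀ v, ReflTransGen (SymmGen (pairRel P)) u v → v < i from
    (this w huw).not_gt hiw
  intro v huv
  induction huv with
  | refl => exact hui
  | @tail v v' huv hvv' ih =>
    have hv' : v' ≠ i := by rintro rfl; exact hi (huv.tail hvv')
    rcases hvv' with h | h
    · exact (hno (v, v') h huv ih).lt_of_ne hv'
    · exact (hlt _ h).trans ih

theorem saturated_Icc_of_eqvGen_hull (hlt : ∀ p ∈ P, p.1 < p.2) (hnested : Nested P)
    {a x y : α} (hx : EqvGen (pairRel P) a x) (hy : EqvGen (pairRel P) a y)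
    (hxy : ∀ v, EqvGen (pairRel P) a v → v ∈ Set.Icc x y) :
    Saturated P (Set.Icc x y) := by
  have straddled : ∀ k ∈ Set.Icc x y, ¬ EqvGen (pairRel P) a k →
      ∃ p ∈ P, x ≤ p.1 ∧ p.1 < k ∧ k < p.2 ∧ p.2 ≤ y := by
    rintro k ⟨hxk, hky⟩ hk
    have hxk' : x < k := hxk.lt_of_ne (by rintro rfl; exact hk hx)
    have hky' : k < y := hky.lt_of_ne (by rintro rfl; exact hk hy)
    obtain ⟨p, hp, hxp, h₁, h₂⟩ :=
      exists_straddle_of_eqvGen hlt (_root_.trans (symm hx) hy) hxk' hky'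
        fun h => hk (_root_.trans hx h)
    have hp₁ := _root_.trans hx hxp
    exact ⟨p, hp, (hxy _ hp₁).1, h₁, h₂, (hxy _ (_root_.trans hp₁ (.rel _ _ hp))).2⟩
  rintro ⟨i, j⟩ hij
  have hij' : i < j := hlt _ hij
  constructor
  · intro hi
    by_contra hj
    have hyj : y < j := by
      simp only [Set.mem_Icc, not_and, not_le] at hi hj
      exact hj (hi.1.trans hij'.le)
    by_cases hai : EqvGen (pairRel P) a i
    · exact hj (hxy _ (_root_.trans hai (.rel _ _ hij)))
    obtain ⟨p, hp, -, h₁, h₂, h₃⟩ := straddled i hi hai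
    exact hnested ⟨p, (i, j), hp, hij, h₁, h₂, h₃.trans_lt hyj⟩
  · intro hj
    by_contra hi
    have hix : i < x := by
      simp only [Set.mem_Icc, not_and, not_le] at hi hj
      by_contra! hxi
      exact (hi hxi).not_ge (hij'.le.trans hj.2)
    by_cases haj : EqvGen (pairRel P) a j
    · exact hi (hxy _ (_root_.trans haj (symm (.rel _ _ hij))))
    obtain ⟨p, hp, h₀, h₁, h₂, -⟩ := straddled j hj haj
    exact hnested ⟨(i, j), p, hij, hp, hix.trans_le h₀, h₁, h₂⟩

theorem exists_eqvGen_hull [Finite α] (P : Set (α × α)) (a : α) :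
    ∃ x y, EqvGen (pairRel P) a x ∧ EqvGen (pairRel P) a y ∧
      ∀ v, EqvGen (pairRel P) a v → v ∈ Set.Icc x y := by
  obtain ⟨x, hx, hxmin⟩ :=
    Set.exists_min_image {v | EqvGen (pairRel P) a v} id (Set.toFinite _) ⟨a, .refl a⟩
  obtain ⟨y, hy, hymax⟩ :=
    Set.exists_max_image {v | EqvGen (pairRel P) a v} id (Set.toFinite _) ⟨a, .refl a⟩
  exact ⟨x, y, hx, hy, fun v hv => ⟨hxmin v hv, hymax v hv⟩⟩

theorem exists_saturated_Icc_separating [Finite α] (hlt : ∀ p ∈ P, p.1 < p.2)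
    (hnested : Nested P) {a b : α} (hab : ¬ EqvGen (pairRel P) a b) :
    ∃ x y, Saturated P (Set.Icc x y) ∧ ¬ (a ∈ Set.Icc x y ↔ b ∈ Set.Icc x y) := by
  obtain ⟨xa, ya, hxa, hya, ha⟩ := exists_eqvGen_hull P a
  obtain ⟨xb, yb, hxb, hyb, hb⟩ := exists_eqvGen_hull P b
  have hsa := saturated_Icc_of_eqvGen_hull hlt hnested hxa hya ha
  have hsb := saturated_Icc_of_eqvGen_hull hlt hnested hxb hyb hb
  rcases lt_trichotomy xa xb with h | rfl | h
  · refine ⟨xb, yb, hsb, fun hiff => h.not_ge ?_⟩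
    exact ((hsb.mem_iff_of_eqvGen hxa).1 (hiff.2 (hb b (.refl b)))).1
  · exact (hab (_root_.trans hxa (symm hxb))).elim
  · refine ⟨xa, ya, hsa, fun hiff => h.not_ge ?_⟩
    exact ((hsa.mem_iff_of_eqvGen hxb).1 (hiff.1 (ha a (.refl a)))).1

end Nested

section Cycle

variable {l : ℕ}

theorem val_nxt (i : Fin l) : (nxt i : ℕ) = if (i : ℕ) + 1 = l then 0 else (i : ℕ) + 1 := by
  change ((i : ℕ) + 1) % l = _
  split_ifs with h
  · simp [h]
  · exact Nat.mod_eq_of_lt (by omega)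

theorem nxt_injective : Function.Injective (nxt : Fin l → Fin l) := by
  refine fun i j h => Fin.ext ?_
  have hi := val_nxt i
  have hj := val_nxt j
  rw [h] at hi
  split_ifs at hi hj <;> omega

theorem nxt_surjective : Function.Surjective (nxt : Fin l → Fin l) :=
  Finite.surjective_of_injective nxt_injective

theorem nxt_mem_Icc_iff {x y i : Fin l} (hx : nxt i ≠ x) (hy : i ≠ y) :
    nxt i ∈ Set.Icc x y ↔ i ∈ Set.Icc x y := by
  have h := val_nxt i
  simp only [Set.mem_Icc, Fin.le_def, ne_eq, Fin.ext_iff] at hx hy ⊢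
  split_ifs at h <;> omega

def cycleAdjWithout (P : Set (Fin l × Fin l)) (p q : Fin l) (X Y : Quot (pairRel P)) : Prop :=
  ∃ i : Fin l, i ≠ p ∧ i ≠ q ∧
    ((X = Quot.mk _ i ∧ Y = Quot.mk _ (nxt i)) ∨ (X = Quot.mk _ (nxt i) ∧ Y = Quot.mk _ i))

theorem not_reflTransGen_cycleAdjWithout {P : Set (Fin l × Fin l)} {p x y a b : Fin l}
    (hs : Saturated P (Set.Icc x y)) (hp : nxt p = x)
    (hab : ¬ (a ∈ Set.Icc x y ↔ b ∈ Set.Icc x y)) :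
    ¬ ReflTransGen (cycleAdjWithout P p y) (Quot.mk _ a) (Quot.mk _ b) := by
  let S : Quot (pairRel P) → Prop :=
    Quot.lift (· ∈ Set.Icc x y) fun v w h => propext (hs (v, w) h)
  have step : ∀ X Y, cycleAdjWithout P p y X Y → (S X ↔ S Y) := by
    rintro _ _ ⟨i, hip, hiy, ⟨rfl, rfl⟩ | ⟨rfl, rfl⟩⟩
    · exact (nxt_mem_Icc_iff (hp ▸ nxt_injective.ne hip) hiy).symm
    · exact nxt_mem_Icc_iff (hp ▸ nxt_injective.ne hip) hiy
  suffices ∀ X Y, ReflTransGen (cycleAdjWithout P p y) X Y → (S X ↔ S Y) from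
    fun h => hab (this _ _ h)
  intro X Y h
  induction h with
  | refl => rfl
  | tail _ hYZ ih => exact ih.trans (step _ _ hYZ)

end Cycle

theorem stmt_15_general (l : ℕ) (P : Set (Fin l × Fin l))
    (hlt : ∀ p ∈ P, p.1 < p.2)
    (hnested : ¬ ∃ p q : Fin l × Fin l,
      p ∈ P ∧ q ∈ P ∧ p.1 < q.1 ∧ q.1 < p.2 ∧ p.2 < q.2) :
    ∀ A B : Quot (fun i j : Fin l => (i, j) ∈ P), A ≠ B →
      ∃ p q : Fin l,
        ¬ Relation.ReflTransGen
            (fun X Y : Quot (fun i j : Fin l => (i, j) ∈ P) =>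
              ∃ i : Fin l, i ≠ p ∧ i ≠ q ∧
                ((X = Quot.mk (fun i j : Fin l => (i, j) ∈ P) i ∧
                    Y = Quot.mk (fun i j : Fin l => (i, j) ∈ P) (nxt i)) ∨
                  (X = Quot.mk (fun i j : Fin l => (i, j) ∈ P) (nxt i) ∧
                    Y = Quot.mk (fun i j : Fin l => (i, j) ∈ P) i)))
            A B := by
  rintro ⟨a⟩ ⟨b⟩ hAB
  obtain ⟨x, y, hs, hsep⟩ :=
    exists_saturated_Icc_separating hlt hnested fun h => hAB (Quot.eqvGen_sound h)
  obtain ⟨p, hp⟩ := nxt_surjective x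
  exact ⟨p, y, not_reflTransGen_cycleAdjWithout hs hp hsep⟩

/-- Merging the vertices of a simple cycle of length `l` along a nested set
of pairs yields a 2-edge-connected structure: any two distinct classes can be
disconnected by removing two edges of the cycle (hence the quotient is a
cactus graph). -/
theorem stmt_15 (l : ℕ) (hl : 1 ≤ l) (P : Set (Fin l × Fin l))
    (hlt : ∀ p ∈ P, p.1 < p.2)
    (hnested : ¬ ∃ p q : Fin l × Fin l,
      p ∈ P ∧ q ∈ P ∧ p.1 < q.1 ∧ q.1 < p.2 ∧ p.2 < q.2) :
    ∀ A B : Quot (fun i j : Fin l => (i, j) ∈ P), A ≠ B →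
      ∃ p q : Fin l,
        ¬ Relation.ReflTransGen
            (fun X Y : Quot (fun i j : Fin l => (i, j) ∈ P) =>
              ∃ i : Fin l, i ≠ p ∧ i ≠ q ∧
                ((X = Quot.mk (fun i j : Fin l => (i, j) ∈ P) i ∧
                    Y = Quot.mk (fun i j : Fin l => (i, j) ∈ P) (nxt i)) ∨
                  (X = Quot.mk (fun i j : Fin l => (i, j) ∈ P) (nxt i) ∧
                    Y = Quot.mk (fun i j : Fin l => (i, j) ∈ P) i)))
            A B :=
  stmt_15_general l P hlt hnested
end
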